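/- In G_{M,t,3}, any two distinct a-vertices a_i and a_j (i ≠ j) are at distance at least 4; hence any 3-club contains at most one a-vertex. -/

import Mathlib

/-- `S` is an `s`-club of `G`: the subgraph induced by `S` has diameter at most `s`. -/
def IsSClub {V : Type*} (G : SimpleGraph V) (s : ℕ) (S : Set V) : Prop :=
  ∀ u v : S, ∃ p : (G.induce S).Walk u v, p.length ≤ s

/-- Vertices of the graph `G_{M,t,3}`. -/
inductive MVtx3 (X Y Z : Type) (m t : ℕ) where
  | vx (a : X)
  | vy (b : Y)
  | vz (c : Z)
  | va (i : Fin m)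
  | vc (i : Fin m)
  | vh (i : Fin m) (j : Fin (t - 5))

/-- Base adjacency relation of `G_{M,t,3}`. -/
def MRel3 {X Y Z : Type} {m t : ℕ} (tr : Fin m → X × Y × Z) :
    MVtx3 X Y Z m t → MVtx3 X Y Z m t → Prop
  | MVtx3.vc i, MVtx3.va i' => i = i'
  | MVtx3.va i, MVtx3.vh i' _ => i = i'
  | MVtx3.vc i, MVtx3.vx a => (tr i).1 = a
  | MVtx3.vc i, MVtx3.vy b => (tr i).2.1 = b
  | MVtx3.vc i, MVtx3.vz c => (tr i).2.2 = c
  | _, _ => False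

/-- The graph `G_{M,t,3}`. -/
def MGraph3 {X Y Z : Type} {m t : ℕ} (tr : Fin m → X × Y × Z) :
    SimpleGraph (MVtx3 X Y Z m t) :=
  SimpleGraph.fromRel (MRel3 tr)

/-!
`G_{M,t,3}` is bipartite, with the `c`- and `h`-vertices on one side, so a walk between two
`a`-vertices has even length. The neighbours of `a_i` are `c_i` and the `h_{i,j}`, so distinct
`a_i`, `a_j` have no common neighbour and no such walk has length 0 or 2. A 3-club containing
both would give a walk of length at most 3 between them.
-/

theorem SimpleGraph.Walk.four_le_length_of_commonNeighbors_eq_empty {V : Type*}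
    {G : SimpleGraph V} (c : G.Coloring Bool) {u v : V} (p : G.Walk u v) (hne : u ≠ v)
    (hc : c u = c v) (hcommon : G.commonNeighbors u v = ∅) : 4 ≤ p.length := by
  have heven : Even p.length := (c.even_length_iff_congr p).mpr (by rw [hc])
  have hne0 : p.length ≠ 0 := fun h => hne (SimpleGraph.Walk.eq_of_length_eq_zero h)
  have hne2 : p.length ≠ 2 := fun h => by
    simpa [hcommon] using (G.walkLengthTwoEquivCommonNeighbors u v ⟨p, h⟩).2
  obtain ⟨k, hk⟩ := heven
  omega

theorem IsSClub.exists_walk_length_le {V : Type*} {G : SimpleGraph V} {s : ℕ} {S : Set V}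
    (hS : IsSClub G s S) {u v : V} (hu : u ∈ S) (hv : v ∈ S) :
    ∃ p : G.Walk u v, p.length ≤ s := by
  obtain ⟨p, hp⟩ := hS ⟨u, hu⟩ ⟨v, hv⟩
  exact ⟨p.map (SimpleGraph.Embedding.induce S).toHom, (p.length_map _).trans_le hp⟩

namespace MGraph3

variable {X Y Z : Type} {m t : ℕ} (tr : Fin m → X × Y × Z)

def bicoloring : (MGraph3 (t := t) tr).Coloring Bool :=
  SimpleGraph.Coloring.mk
    (fun | MVtx3.vc _ => true | MVtx3.vh _ _ => true | _ => false)
    (fun {u v} h => by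
      rw [MGraph3, SimpleGraph.fromRel_adj] at h
      cases u <;> cases v <;> simp_all [MRel3])

theorem commonNeighbors_va_va {i j : Fin m} (hij : i ≠ j) :
    (MGraph3 tr).commonNeighbors (MVtx3.va i : MVtx3 X Y Z m t) (MVtx3.va j) = ∅ := by
  ext w
  cases w <;> simp [SimpleGraph.commonNeighbors, MGraph3, MRel3] <;> grind

end MGraph3

/-- In `G_{M,t,3}`, any two distinct `a`-vertices are at distance at least 4 (every
walk between them has length at least 4); hence any 3-club contains at most one
`a`-vertex. -/
theorem aVertices_far_apart {X Y Z : Type} {m t : ℕ}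
    (tr : Fin m → X × Y × Z) :
    (∀ i j : Fin m, i ≠ j →
      ∀ p : (MGraph3 tr).Walk (MVtx3.va i : MVtx3 X Y Z m t) (MVtx3.va j),
        4 ≤ p.length) ∧
    (∀ S : Set (MVtx3 X Y Z m t), IsSClub (MGraph3 tr) 3 S →
      ∀ i j : Fin m, MVtx3.va i ∈ S → MVtx3.va j ∈ S → i = j) := by
  have far : ∀ i j : Fin m, i ≠ j →
      ∀ p : (MGraph3 tr).Walk (MVtx3.va i : MVtx3 X Y Z m t) (MVtx3.va j), 4 ≤ p.length :=
    fun i j hij p => p.four_le_length_of_commonNeighbors_eq_empty (MGraph3.bicoloring tr)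
      (by simpa using hij) rfl (MGraph3.commonNeighbors_va_va tr hij)
  refine ⟨far, fun S hS i j hi hj => ?_⟩
  by_contra hij
  obtain ⟨p, hp⟩ := hS.exists_walk_length_le hi hj
  have := far i j hij p
  omega
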